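/- arXiv:1911.08158 — 2 statements merged into one kernel-verified Lean document; each statement's English description precedes it below -/
import Mathlib

section
/- The Newmark update with β = 1/4, γ = 1/2 conserves the discrete energy for the undamped linear system: if ü_{n+1} = −A u_{n+1}, u_{n+1} = u_n + τ u̇_n + (τ²/4)(ü_n + ü_{n+1}), u̇_{n+1} = u̇_n + (τ/2)(ü_n + ü_{n+1}), then (1/2)⟨u̇_{n+1}, M u̇_{n+1}⟩ + (1/2)⟨u_{n+1}, K u_{n+1}⟩ = (1/2)⟨u̇_n, M u̇_n⟩ + (1/2)⟨u_n, K u_n⟩, where A = M^{-1}K. -/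
open Matrix

/-- The Newmark update with `β = 1/4`, `γ = 1/2` (average acceleration) conserves the
discrete energy `(1/2)⟨u̇, M u̇⟩ + (1/2)⟨u, K u⟩` for the undamped linear system
`ü = −M⁻¹ K u`. -/
theorem newmark_energy_conservation {n : ℕ}
    (M K : Matrix (Fin n) (Fin n) ℝ) (hM : M.PosDef) (hK : K.IsSymm)
    (A : Matrix (Fin n) (Fin n) ℝ) (hA : A = M⁻¹ * K)
    (τ : ℝ) (u v a u' v' a' : Fin n → ℝ)
    (ha : a = -(A *ᵥ u))
    (ha' : a' = -(A *ᵥ u'))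
    (hu' : u' = u + τ • v + (τ ^ 2 / 4) • (a + a'))
    (hv' : v' = v + (τ / 2) • (a + a')) :
    (1 / 2) * (v' ⬝ᵥ (M *ᵥ v')) + (1 / 2) * (u' ⬝ᵥ (K *ᵥ u'))
      = (1 / 2) * (v ⬝ᵥ (M *ᵥ v)) + (1 / 2) * (u ⬝ᵥ (K *ᵥ u)) := by
  have hMdet : IsUnit M.det := isUnit_iff_ne_zero.mpr hM.det_pos.ne'
  have hMa : M *ᵥ a = -(K *ᵥ u) := by
    rw [ha, hA, Matrix.mulVec_neg, ← Matrix.mulVec_mulVec, Matrix.mulVec_mulVec,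
      Matrix.mul_nonsing_inv M hMdet, Matrix.one_mulVec]
  have hMa' : M *ᵥ a' = -(K *ᵥ u') := by
    rw [ha', hA, Matrix.mulVec_neg, ← Matrix.mulVec_mulVec, Matrix.mulVec_mulVec,
      Matrix.mul_nonsing_inv M hMdet, Matrix.one_mulVec]
  have hMsymm : M.IsSymm := hM.isHermitian
  have symK : ∀ x y : Fin n → ℝ, x ⬝ᵥ (K *ᵥ y) = y ⬝ᵥ (K *ᵥ x) := by
    intro x y
    rw [Matrix.dotProduct_mulVec, ← Matrix.mulVec_transpose, hK, dotProduct_comm]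
  have symM : ∀ x y : Fin n → ℝ, x ⬝ᵥ (M *ᵥ y) = y ⬝ᵥ (M *ᵥ x) := by
    intro x y
    rw [Matrix.dotProduct_mulVec, ← Matrix.mulVec_transpose, hMsymm, dotProduct_comm]
  -- difference identities
  have hdv : v' - v = (τ / 2) • (a + a') := by rw [hv']; abel
  have hdu : u' - u = (τ / 2) • (v + v') := by
    rw [hu', hv']; funext i
    simp only [Pi.add_apply, Pi.sub_apply, Pi.smul_apply, smul_eq_mul]
    ring
  have diffM : v' ⬝ᵥ (M *ᵥ v') - v ⬝ᵥ (M *ᵥ v) = (v' + v) ⬝ᵥ (M *ᵥ (v' - v)) := by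
    simp only [Matrix.mulVec_sub, dotProduct_sub, add_dotProduct]
    rw [symM v v']; ring
  have diffK : u' ⬝ᵥ (K *ᵥ u') - u ⬝ᵥ (K *ᵥ u) = (u' + u) ⬝ᵥ (K *ᵥ (u' - u)) := by
    simp only [Matrix.mulVec_sub, dotProduct_sub, add_dotProduct]
    rw [symK u u']; ring
  have h1 : v' ⬝ᵥ (M *ᵥ v') - v ⬝ᵥ (M *ᵥ v)
      = -((τ / 2) * ((v' + v) ⬝ᵥ (K *ᵥ (u + u')))) := by
    rw [diffM, hdv, Matrix.mulVec_smul, dotProduct_smul, Matrix.mulVec_add, hMa, hMa']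
    simp only [smul_eq_mul, dotProduct_neg, neg_add_rev, ← Matrix.mulVec_add]
    simp only [Matrix.mulVec_add, dotProduct_add, dotProduct_neg, smul_eq_mul]
    ring
  have h2 : u' ⬝ᵥ (K *ᵥ u') - u ⬝ᵥ (K *ᵥ u)
      = (τ / 2) * ((u' + u) ⬝ᵥ (K *ᵥ (v + v'))) := by
    rw [diffK, hdu, Matrix.mulVec_smul, dotProduct_smul, smul_eq_mul]
  have h3 : (v' + v) ⬝ᵥ (K *ᵥ (u + u')) = (u' + u) ⬝ᵥ (K *ᵥ (v + v')) := by
    rw [symK]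
    congr 1 <;> abel
  have hz : v' ⬝ᵥ (M *ᵥ v') - v ⬝ᵥ (M *ᵥ v) + (u' ⬝ᵥ (K *ᵥ u') - u ⬝ᵥ (K *ᵥ u)) = 0 := by
    rw [h1, h2, h3]; ring
  linarith [hz]
end

section
/- The telescoping energy identity for the second-order scheme with f = 0: if D(U^{n+1} − 2U^n + U^{n−1}) + (τ²/4)Υ(U^{n+1} + 2U^n + U^{n−1}) = 0 with D, Υ symmetric, then E^{n+1} = E^n where E^n = ‖(U^n − U^{n−1})/τ‖²_D + ‖(U^n + U^{n−1})/2‖²_Υ and ‖x‖²_A = ⟨x, Ax⟩. -/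
open Matrix

lemma symm_dot_swap {N : ℕ} (A : Matrix (Fin N) (Fin N) ℝ) (hA : A.IsSymm)
    (x y : Fin N → ℝ) : x ⬝ᵥ (A *ᵥ y) = y ⬝ᵥ (A *ᵥ x) := by
  rw [Matrix.dotProduct_mulVec, ← Matrix.mulVec_transpose, hA.eq,
    dotProduct_comm]

lemma symm_sq_diff {N : ℕ} (A : Matrix (Fin N) (Fin N) ℝ) (hA : A.IsSymm)
    (a b : Fin N → ℝ) :
    a ⬝ᵥ (A *ᵥ a) - b ⬝ᵥ (A *ᵥ b) = (a + b) ⬝ᵥ (A *ᵥ (a - b)) := by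
  rw [Matrix.mulVec_sub, add_dotProduct, dotProduct_sub,
    dotProduct_sub, symm_dot_swap A hA b a]
  ring

/-- Telescoping energy identity for the second-order scheme with `f = 0`:
if `D(U⁺ − 2U⁰ + U⁻) + (τ²/4)Υ(U⁺ + 2U⁰ + U⁻) = 0` with `D, Υ` symmetric, then
`E⁺ = E⁰` where `Eⁿ = ‖(Uⁿ − Uⁿ⁻¹)/τ‖²_D + ‖(Uⁿ + Uⁿ⁻¹)/2‖²_Υ`. -/
theorem telescoping_energy_identity {N : ℕ}
    (D Y : Matrix (Fin N) (Fin N) ℝ) (hD : D.IsSymm) (hY : Y.IsSymm)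
    (τ : ℝ) (hτ : 0 < τ) (Um U0 Up : Fin N → ℝ)
    (h : D *ᵥ (Up - 2 • U0 + Um) + (τ ^ 2 / 4) • (Y *ᵥ (Up + 2 • U0 + Um)) = 0) :
    ((τ⁻¹ • (Up - U0)) ⬝ᵥ (D *ᵥ (τ⁻¹ • (Up - U0))))
        + (((1 / 2 : ℝ) • (Up + U0)) ⬝ᵥ (Y *ᵥ ((1 / 2 : ℝ) • (Up + U0))))
      = ((τ⁻¹ • (U0 - Um)) ⬝ᵥ (D *ᵥ (τ⁻¹ • (U0 - Um))))
        + (((1 / 2 : ℝ) • (U0 + Um)) ⬝ᵥ (Y *ᵥ ((1 / 2 : ℝ) • (U0 + Um)))) := by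
  have hτ2 : τ ^ 2 ≠ 0 := pow_ne_zero _ hτ.ne'
  have key : (Up - Um) ⬝ᵥ
      (D *ᵥ (Up - 2 • U0 + Um) + (τ ^ 2 / 4) • (Y *ᵥ (Up + 2 • U0 + Um))) = 0 := by
    rw [h, dotProduct_zero]
  have hDdiff := symm_sq_diff D hD (Up - U0) (U0 - Um)
  have hYdiff := symm_sq_diff Y hY (Up + U0) (U0 + Um)
  have e1 : (Up - U0) + (U0 - Um) = Up - Um := by abel
  have e2 : (Up - U0) - (U0 - Um) = Up - 2 • U0 + Um := by
    simp [two_smul]; abel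
  have e3 : (Up + U0) + (U0 + Um) = Up + 2 • U0 + Um := by
    simp [two_smul]; abel
  have e4 : (Up + U0) - (U0 + Um) = Up - Um := by abel
  rw [e1, e2] at hDdiff
  rw [e3, e4] at hYdiff
  rw [dotProduct_add, dotProduct_smul] at key
  -- goal is linear combination
  have hD' : (Up - Um) ⬝ᵥ (D *ᵥ (Up - 2 • U0 + Um))
      = (Up - U0) ⬝ᵥ (D *ᵥ (Up - U0)) - (U0 - Um) ⬝ᵥ (D *ᵥ (U0 - Um)) := hDdiff.symm
  have hY' : (Up - Um) ⬝ᵥ (Y *ᵥ (Up + 2 • U0 + Um))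
      = (Up + U0) ⬝ᵥ (Y *ᵥ (Up + U0)) - (U0 + Um) ⬝ᵥ (Y *ᵥ (U0 + Um)) :=
    (symm_dot_swap Y hY _ _).trans hYdiff.symm
  rw [hD', hY'] at key
  simp only [smul_dotProduct, dotProduct_smul, Matrix.mulVec_smul,
    smul_eq_mul] at key ⊢
  set a := (Up - U0) ⬝ᵥ (D *ᵥ (Up - U0)) with ha
  set b := (U0 - Um) ⬝ᵥ (D *ᵥ (U0 - Um)) with hb
  set c := (Up + U0) ⬝ᵥ (Y *ᵥ (Up + U0)) with hc
  set d := (U0 + Um) ⬝ᵥ (Y *ᵥ (U0 + Um)) with hd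
  field_simp
  nlinarith [key]
end
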